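/- Let (R, m_R) and (S, m_S) be Noetherian local rings, both of Krull dimension 2. Assume Spec(R) is irreducible (R has a unique minimal prime) and Spec(S) is equidimensional (all minimal primes of S have coheight 2). Let φ : R → S be a flat local ring homomorphism (so the induced map f : Spec(S) → Spec(R) satisfies f⁻¹(m_R) = m_S). Then f is weakly catenarious. -/

import Mathlib

/-!
Let `T = cl{x}` have codimension one in `cl T' = cl{ξ}`, where `T'` is a component of the fibre
over `y`, and suppose `y < z < f x` in `Spec R`. As `dim R = 2`, `y` is a minimal prime, so the
fibre over `y` is stable under generalization and `ξ` is a minimal prime of `S`. Going down for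
the flat map lifts `y < z < f x` to a chain of length two ending at `x`, so `x = m_S` because
`dim S = 2`. Equidimensionality then gives `ξ < a < m_S = x`, contradicting `codim(T, cl T') = 1`.
-/

open TopologicalSpace

section TopDefs

variable {α β : Type*} [TopologicalSpace α] [TopologicalSpace β]

/-- The closure of a point, as an irreducible closed subset. -/
noncomputable def ptIC (x : α) : IrreducibleCloseds α :=
  ⟨closure {x}, isIrreducible_singleton.closure, isClosed_closure⟩

/-- `codim(T, T')`: the supremum of lengths `n` of chains
`T = T₀ ⊊ T₁ ⊊ ⋯ ⊊ Tₙ ⊆ T'` of irreducible closed subsets. -/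
noncomputable def icCodim (T T' : IrreducibleCloseds α) : ℕ∞ :=
  Set.chainHeight {Z : IrreducibleCloseds α | T < Z ∧ Z ≤ T'} (· < ·)

/-- The codimension of an irreducible closed subset in the whole space. -/
noncomputable def spCodim (T : IrreducibleCloseds α) : ℕ∞ :=
  Set.chainHeight {Z : IrreducibleCloseds α | T < Z} (· < ·)

/-- The closure of the image of an irreducible closed subset under a continuous map,
as an irreducible closed subset. -/
noncomputable def imageIC (f : α → β) (hf : Continuous f) (T : IrreducibleCloseds α) :
    IrreducibleCloseds β :=
  ⟨closure (f '' (T : Set α)),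
    (T.isIrreducible.image f hf.continuousOn).closure, isClosed_closure⟩

/-- `p` is a maximal chain of irreducible closed subsets starting with `T` and
ending with `T'`: no further irreducible closed subset can be inserted. -/
def IsMaxChainBtw (T T' : IrreducibleCloseds α) (p : LTSeries (IrreducibleCloseds α)) : Prop :=
  p.head = T ∧ p.last = T' ∧
    ∀ i : Fin p.length, ∀ Z : IrreducibleCloseds α,
      ¬ (p.toFun i.castSucc < Z ∧ Z < p.toFun i.succ)

/-- A topological space is catenary if for all irreducible closed subsets `T ⊆ T'`,
every maximal chain of irreducible closed subsets starting with `T` and ending with `T'`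
has the same length. -/
def CatenarySpace (α : Type*) [TopologicalSpace α] : Prop :=
  ∀ T T' : IrreducibleCloseds α, T ≤ T' →
    ∀ p q : LTSeries (IrreducibleCloseds α),
      IsMaxChainBtw T T' p → IsMaxChainBtw T T' q → p.length = q.length

/-- A continuous map is catenarious if
`codim(T, T') ≥ codim(cl(f(T)), cl(f(T')))` for all irreducible closed `T ⊆ T'`. -/
def Catenarious (f : α → β) (hf : Continuous f) : Prop :=
  ∀ T T' : IrreducibleCloseds α, T ≤ T' →
    icCodim (imageIC f hf T) (imageIC f hf T') ≤ icCodim T T'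

/-- `T'` is an irreducible component of the subset `s`:
a maximal irreducible subset of `s`. -/
def IsIrredComponentOf (T' s : Set α) : Prop :=
  T' ⊆ s ∧ IsIrreducible T' ∧ ∀ W : Set α, IsIrreducible W → T' ⊆ W → W ⊆ s → W = T'

/-- A continuous map `f` is weakly catenarious if for every point `y`, every irreducible
component `T'` of `f ⁻¹ y`, and every irreducible closed `T ⊆ cl(T')` with
`codim(T, cl(T')) = 1`, one has `codim(cl(f(T)), cl(f(T'))) ≤ 1`. -/
def WeaklyCatenarious (f : α → β) (hf : Continuous f) : Prop :=
  ∀ y : β, ∀ T' : Set α, ∀ h : IsIrredComponentOf T' (f ⁻¹' {y}),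
    ∀ T : IrreducibleCloseds α, (T : Set α) ⊆ closure T' →
      icCodim T ⟨closure T', h.2.1.closure, isClosed_closure⟩ = 1 →
      icCodim (imageIC f hf T)
        ⟨closure (f '' T'), (h.2.1.image f hf.continuousOn).closure, isClosed_closure⟩ ≤ 1

/-- A space is biequidimensional if all maximal chains of irreducible closed subsets
have the same length. -/
def BiequidimensionalSpace (α : Type*) [TopologicalSpace α] : Prop :=
  ∀ p q : LTSeries (IrreducibleCloseds α),
    (IsMin p.head ∧ IsMax p.last ∧ ∀ i : Fin p.length, ∀ Z : IrreducibleCloseds α,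
      ¬ (p.toFun i.castSucc < Z ∧ Z < p.toFun i.succ)) →
    (IsMin q.head ∧ IsMax q.last ∧ ∀ i : Fin q.length, ∀ Z : IrreducibleCloseds α,
      ¬ (q.toFun i.castSucc < Z ∧ Z < q.toFun i.succ)) →
    p.length = q.length

/-- `x` is a generic point of (an irreducible component of) the fiber `f ⁻¹ y`:
it lies in the fiber and admits no strict generalization inside the fiber. -/
def IsFiberGeneric (f : α → β) (y : β) (x : α) : Prop :=
  f x = y ∧ ∀ z : α, f z = y → x ∈ closure {z} → z ∈ closure {x}

end TopDefs

/-- A morphism of schemes is flat if for every point the induced map of local rings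
(stalks) is flat. -/
def SchemeHomFlat {X Y : AlgebraicGeometry.Scheme} (f : X ⟶ Y) : Prop :=
  ∀ x : X, RingHom.Flat (f.stalkMap x).hom

theorem Set.two_le_chainHeight_Ioc_iff {P : Type*} [Preorder P] {a b : P} :
    2 ≤ (Set.Ioc a b).chainHeight (· < ·) ↔ (Set.Ioo a b).Nonempty := by
  constructor
  · intro h
    obtain ⟨t, hts, htc, hchain⟩ := Set.exists_isChain_of_le_chainHeight 2 h
    obtain ⟨u, v, huv, rfl⟩ := Set.encard_eq_two.mp htc
    have hu := hts (Set.mem_insert u {v})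
    have hv := hts (Set.mem_insert_of_mem u rfl)
    rcases hchain (Set.mem_insert u {v}) (Set.mem_insert_of_mem u rfl) huv with h | h
    · exact ⟨u, hu.1, h.trans_le hv.2⟩
    · exact ⟨v, hv.1, h.trans_le hu.2⟩
  · rintro ⟨z, haz, hzb⟩
    calc (2 : ℕ∞) = ({z, b} : Set P).encard := (Set.encard_pair hzb.ne).symm
      _ ≤ _ := Set.encard_le_chainHeight_of_isChain _ _
          (Set.pair_subset (show z ∈ Set.Ioc a b from ⟨haz, hzb.le⟩)
            (show b ∈ Set.Ioc a b from ⟨haz.trans hzb, le_rfl⟩)) (IsChain.pair hzb)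

namespace Order

variable {α : Type*} [Preorder α]

theorem three_le_krullDim_of_lt_of_lt_of_lt {a b c d : α}
    (hab : a < b) (hbc : b < c) (hcd : c < d) : 3 ≤ krullDim α := by
  simpa [RelSeries.fromListIsChain] using LTSeries.length_le_krullDim
    (RelSeries.fromListIsChain [a, b, c, d] (by simp) (by simp [hab, hbc, hcd]))

theorem isMin_of_lt_of_lt_of_krullDim_le_two (hdim : krullDim α ≤ 2) {a b c : α}
    (hab : a < b) (hbc : b < c) : IsMin a := by
  by_contra h
  obtain ⟨a', ha'⟩ := not_isMin_iff.mp h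
  have := (three_le_krullDim_of_lt_of_lt_of_lt ha' hab hbc).trans hdim
  norm_num at this

theorem isMax_of_lt_of_lt_of_krullDim_le_two (hdim : krullDim α ≤ 2) {a b c : α}
    (hab : a < b) (hbc : b < c) : IsMax c := by
  by_contra h
  obtain ⟨c', hc'⟩ := not_isMax_iff.mp h
  have := (three_le_krullDim_of_lt_of_lt_of_lt hab hbc hc').trans hdim
  norm_num at this

theorem exists_lt_lt_top_of_coheight_eq_two [OrderTop α] {a : α} (h : coheight a = 2) :
    ∃ b, a < b ∧ b < ⊤ := by
  obtain ⟨b, hab, hb⟩ :=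
    (coe_lt_coheight_iff (n := 1) (by rw [h]; decide)).mp (by rw [h]; decide)
  obtain ⟨c, hbc⟩ := not_isMax_iff.mp (coheight_ne_zero.mp (by rw [hb]; decide))
  exact ⟨b, hab, hbc.trans_le le_top⟩

end Order

section IrreducibleCloseds

variable {α β : Type*} [TopologicalSpace α] [TopologicalSpace β]

theorem icCodim_le_one_iff {T T' : IrreducibleCloseds α} :
    icCodim T T' ≤ 1 ↔ ∀ Z, T < Z → ¬ Z < T' := by
  rw [← not_lt, ← Order.add_one_le_iff_of_not_isMax (by simp), one_add_one_eq_two, icCodim,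
    show {Z | T < Z ∧ Z ≤ T'} = Set.Ioc T T' from rfl, Set.two_le_chainHeight_Ioc_iff]
  simp [Set.Nonempty]

theorem ptIC_le_ptIC_iff {x y : α} : ptIC x ≤ ptIC y ↔ y ⤳ x :=
  specializes_iff_closure_subset.symm

theorem TopologicalSpace.IrreducibleCloseds.exists_eq_ptIC [QuasiSober α]
    (T : IrreducibleCloseds α) : ∃ x, T = ptIC x :=
  let ⟨x, hx⟩ := QuasiSober.sober T.isIrreducible T.isClosed
  ⟨x, IrreducibleCloseds.ext hx.symm⟩

theorem imageIC_ptIC {f : α → β} (hf : Continuous f) (x : α) :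
    imageIC f hf (ptIC x) = ptIC (f x) :=
  IrreducibleCloseds.ext <| by
    simp only [imageIC, ptIC, IrreducibleCloseds.coe_mk, closure_image_closure hf,
      Set.image_singleton]

theorem IsIrredComponentOf.specializes_of_specializes {T' s : Set α}
    (hT' : IsIrredComponentOf T' s) (hs : StableUnderGeneralization s) {ξ x : α}
    (hξ : IsGenericPoint ξ (closure T')) (hx : x ⤳ ξ) : ξ ⤳ x := by
  obtain ⟨t, ht⟩ := hT'.2.1.nonempty
  have hxs : x ∈ s := hs (hx.trans (hξ.specializes (subset_closure ht))) (hT'.1 ht)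
  have hT'x : T' ⊆ closure {x} := fun w hw =>
    specializes_iff_mem_closure.mp (hx.trans (hξ.specializes (subset_closure hw)))
  have hirr : IsIrreducible (insert x T') := by
    have : closure (insert x T') = closure {x} :=
      (closure_minimal (Set.insert_subset (subset_closure (Set.mem_singleton x)) hT'x)
        isClosed_closure).antisymm
        (closure_mono (Set.singleton_subset_iff.mpr (Set.mem_insert x T')))
    rw [← isIrreducible_iff_closure, this]
    exact isIrreducible_singleton.closure
  have hxT' : x ∈ T' :=
    hT'.2.2 _ hirr (Set.subset_insert x T') (Set.insert_subset hxs hT'.1) ▸ Set.mem_insert x T'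
  exact hξ.specializes (subset_closure hxT')

end IrreducibleCloseds

namespace PrimeSpectrum

variable {R S : Type*} [CommRing R] [CommRing S]

theorem ptIC_lt_ptIC_iff {x y : PrimeSpectrum R} : ptIC x < ptIC y ↔ y < x := by
  simp only [lt_iff_le_not_ge, ptIC_le_ptIC_iff, le_iff_specializes]

theorem isMin_of_isIrredComponentOf_fiber_of_isGenericPoint {φ : R →+* S} {y : PrimeSpectrum R}
    (hy : IsMin y) {T' : Set (PrimeSpectrum S)} (hT' : IsIrredComponentOf T' (comap φ ⁻¹' {y}))
    {ξ : PrimeSpectrum S} (hξ : IsGenericPoint ξ (closure T')) : IsMin ξ := fun _ hw =>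
  (le_iff_specializes _ _).mpr <| hT'.specializes_of_specializes
    ((stableUnderGeneralization_singleton.mpr (isMin_iff.mp hy)).preimage (continuous_comap φ))
    hξ ((le_iff_specializes _ _).mp hw)

theorem exists_lt_comap_eq_of_flat {φ : R →+* S} (hφ : φ.Flat) {x : PrimeSpectrum S}
    {y : PrimeSpectrum R} (h : y < comap φ x) : ∃ x' < x, comap φ x' = y := by
  obtain ⟨x', hx', rfl⟩ := hφ.generalizingMap_comap ((le_iff_specializes _ _).mp h.le)
  rw [← le_iff_specializes] at hx'
  exact ⟨x', hx'.lt_of_ne (by rintro rfl; exact h.ne rfl), rfl⟩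

end PrimeSpectrum

theorem statement7_general (R S : Type*) [CommRing R] [CommRing S]
    [IsLocalRing S]
    (hdR : ringKrullDim R = 2) (hdS : ringKrullDim S = 2)
    (hequi : ∀ p ∈ minimalPrimes S, ∀ hp : p.IsPrime,
      Order.coheight (⟨p, hp⟩ : PrimeSpectrum S) = 2)
    (φ : R →+* S) (hflat : φ.Flat) :
    WeaklyCatenarious (PrimeSpectrum.comap φ) (PrimeSpectrum.continuous_comap φ) := by
  intro y T' hT' T _ hcodim
  obtain ⟨ξ, hξ⟩ := QuasiSober.sober hT'.2.1.closure isClosed_closure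
  obtain ⟨x, rfl⟩ := T.exists_eq_ptIC
  have hfiber : PrimeSpectrum.comap φ '' T' = {y} :=
    (Set.image_subset_iff.mpr hT'.1).antisymm <| Set.singleton_subset_iff.mpr <|
      let ⟨t, ht⟩ := hT'.2.1.nonempty; ⟨t, ht, hT'.1 ht⟩
  rw [show (⟨closure T', _, _⟩ : IrreducibleCloseds _) = ptIC ξ from
    IrreducibleCloseds.ext hξ.symm] at hcodim
  rw [show (⟨closure (PrimeSpectrum.comap φ '' T'), _, _⟩ : IrreducibleCloseds _) = ptIC y from
    IrreducibleCloseds.ext (congrArg closure hfiber), imageIC_ptIC, icCodim_le_one_iff]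
  intro Z hxZ hZy
  obtain ⟨z, rfl⟩ := Z.exists_eq_ptIC
  rw [PrimeSpectrum.ptIC_lt_ptIC_iff] at hxZ hZy
  have hymin := Order.isMin_of_lt_of_lt_of_krullDim_le_two hdR.le hZy hxZ
  have hξmin := PrimeSpectrum.isMin_of_isIrredComponentOf_fiber_of_isGenericPoint hymin hT' hξ
  obtain ⟨x₁, hx₁, rfl⟩ := PrimeSpectrum.exists_lt_comap_eq_of_flat hflat hxZ
  obtain ⟨x₂, hx₂, rfl⟩ := PrimeSpectrum.exists_lt_comap_eq_of_flat hflat hZy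
  have hxmax := Order.isMax_of_lt_of_lt_of_krullDim_le_two hdS.le hx₂ hx₁
  obtain ⟨a, hξa, ha⟩ := Order.exists_lt_lt_top_of_coheight_eq_two
    (hequi _ (PrimeSpectrum.isMin_iff.mp hξmin) ξ.2)
  exact icCodim_le_one_iff.mp hcodim.le (ptIC a)
    (PrimeSpectrum.ptIC_lt_ptIC_iff.mpr (ha.trans_le (hxmax le_top)))
    (PrimeSpectrum.ptIC_lt_ptIC_iff.mpr hξa)

/-- Let `R`, `S` be Noetherian local rings of Krull dimension `2` with
`Spec R` irreducible and `Spec S` equidimensional (every minimal prime has coheight `2`).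
Then the map `Spec S → Spec R` induced by a flat local homomorphism `R → S` is weakly
catenarious. -/
theorem statement7 (R S : Type*) [CommRing R] [CommRing S]
    [IsLocalRing R] [IsLocalRing S] [IsNoetherianRing R] [IsNoetherianRing S]
    (hdR : ringKrullDim R = 2) (hdS : ringKrullDim S = 2)
    [IrreducibleSpace (PrimeSpectrum R)]
    (hequi : ∀ p ∈ minimalPrimes S, ∀ hp : p.IsPrime,
      Order.coheight (⟨p, hp⟩ : PrimeSpectrum S) = 2)
    (φ : R →+* S) (hloc : IsLocalHom φ) (hflat : φ.Flat) :
    WeaklyCatenarious (PrimeSpectrum.comap φ) (PrimeSpectrum.continuous_comap φ) :=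
  statement7_general R S hdR hdS hequi φ hflat
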